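/- arXiv:2601.16912 — 3 statements merged into one kernel-verified Lean document; each statement's English description precedes it below -/
import Mathlib

section
/- Let f(t) = sgn(t) on [-1,1] (f(t) = 1 for t > 0, f(t) = −1 for t < 0, f(0) = 0). Then for every s > 0 one has Ω_f(s) = −2is ∫_0^s (u − sin u)/u² du, and consequently for every s > 1, |Ω_f(s)| ≥ 2s(log s − 1 + 1/s). In particular Ω_f(s) is not o(s log s) as s → ∞, so the growth bound Ω_f(s) = O(s log|s|) is sharp. -/
open MeasureTheory

/-- The kernel `v_s(t) = (1 − ist − e^{−ist})/t²` for `t ≠ 0`, `v_s(0) = s²/2`. -/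
noncomputable def vker (s t : ℝ) : ℂ :=
  if t = 0 then (s : ℂ) ^ 2 / 2
  else (1 - Complex.I * s * t - Complex.exp (-(Complex.I * s * t))) / (t : ℂ) ^ 2

/-- `Ω_f(s) = ∫_{-1}^{1} v_s(t) f(t) dt`. -/
noncomputable def Omega (f : ℝ → ℂ) (s : ℝ) : ℂ :=
  ∫ t in Set.Icc (-1 : ℝ) 1, vker s t * f t

lemma vker_measurable (s : ℝ) : Measurable (vker s) := by
  unfold vker
  apply Measurable.ite (measurableSet_eq) measurable_const
  apply Measurable.div _ (by fun_prop)
  apply Measurable.sub (by fun_prop)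
  exact Complex.measurable_exp.comp (by fun_prop)

lemma vker_bound (s : ℝ) (hs : 0 < s) (t : ℝ) : ‖vker s t‖ ≤ 3 * s ^ 2 := by
  unfold vker
  split_ifs with h
  · rw [norm_div]
    simp only [norm_pow, Complex.norm_real, Complex.norm_ofNat, Real.norm_eq_abs, sq_abs]
    nlinarith
  · rw [norm_div]
    have h2 : ‖(t:ℂ)^2‖ = t^2 := by
      rw [norm_pow, Complex.norm_real, Real.norm_eq_abs, sq_abs]
    rw [h2, div_le_iff₀ (by positivity)]
    set z : ℂ := -(Complex.I * s * t) with hz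
    have hzn : ‖z‖ = s * |t| := by
      rw [hz, norm_neg, norm_mul, norm_mul, Complex.norm_I, Complex.norm_real,
        Complex.norm_real, Real.norm_eq_abs, Real.norm_eq_abs, one_mul, abs_of_pos hs]
    have hN : (1 - Complex.I * s * t - Complex.exp z) = -(Complex.exp z - 1 - z) := by
      rw [hz]; ring
    rw [hN, norm_neg]
    rcases le_or_gt (s * |t|) 1 with hst | hst
    · have hb := Complex.norm_exp_sub_one_sub_id_le (x := z) (by
        rw [hzn]; exact hst)
      rw [hzn] at hb
      calc ‖Complex.exp z - 1 - z‖ ≤ (s * |t|)^2 := hb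
        _ ≤ 3 * s ^ 2 * t ^ 2 := by nlinarith [sq_abs t, sq_nonneg (s*|t|)]
    · have hexp : ‖Complex.exp z‖ = 1 := by
        rw [Complex.norm_exp]
        have : z.re = 0 := by simp [hz]
        rw [this, Real.exp_zero]
      have : ‖Complex.exp z - 1 - z‖ ≤ ‖Complex.exp z‖ + ‖(1:ℂ)‖ + ‖z‖ := by
        calc ‖Complex.exp z - 1 - z‖ ≤ ‖Complex.exp z - 1‖ + ‖z‖ := norm_sub_le _ _
          _ ≤ ‖Complex.exp z‖ + ‖(1:ℂ)‖ + ‖z‖ := by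
              have := norm_sub_le (Complex.exp z) 1; linarith
      rw [hexp, norm_one, hzn] at this
      have ht2 : t^2 = |t|^2 := (sq_abs t).symm
      nlinarith [sq_nonneg (s*|t|-1), abs_nonneg t]

lemma vker_sub (s t : ℝ) :
    vker s t - vker s (-t) =
      (-2) * Complex.I * (((s * t - Real.sin (s * t)) / t ^ 2 : ℝ) : ℂ) := by
  rcases eq_or_ne t 0 with rfl | ht
  · simp [vker]
  · have ht' : (-t : ℝ) ≠ 0 := neg_ne_zero.2 ht
    have htc : (t : ℂ) ≠ 0 := Complex.ofReal_ne_zero.2 ht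
    simp only [vker, if_neg ht, if_neg ht']
    have he1 : Complex.exp (-(Complex.I * s * t)) =
        Complex.cos (s * t) - Complex.sin (s * t) * Complex.I := by
      rw [show -(Complex.I * (s:ℂ) * (t:ℂ)) = (-((s:ℂ) * t)) * Complex.I by ring,
        Complex.exp_mul_I, Complex.cos_neg, Complex.sin_neg]
      ring
    have he2 : Complex.exp (-(Complex.I * s * (-t : ℝ))) =
        Complex.cos (s * t) + Complex.sin (s * t) * Complex.I := by
      push_cast
      rw [show -(Complex.I * (s:ℂ) * (-(t:ℂ))) = ((s:ℂ) * t) * Complex.I by ring,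
        Complex.exp_mul_I]
    rw [he1, he2]
    push_cast [Complex.ofReal_sin]
    field_simp
    ring

lemma vker_integrableOn (s : ℝ) (hs : 0 < s) (X : Set ℝ) (hX : volume X ≠ ⊤) :
    IntegrableOn (vker s) X := by
  apply Measure.integrableOn_of_bounded hX ((vker_measurable s).aestronglyMeasurable)
  exact Filter.Eventually.of_forall (vker_bound s hs)

lemma omega_eq (s : ℝ) (hs : 0 < s) :
    Omega (fun t : ℝ => (Real.sign t : ℂ)) s =
      -2 * Complex.I * s * ((∫ u in (0:ℝ)..s, (u - Real.sin u) / u ^ 2 : ℝ) : ℂ) := by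
  have hIoc : ∀ a b : ℝ, IntegrableOn (vker s) (Set.Ioc a b) :=
    fun a b => vker_integrableOn s hs _ (by simp)
  have hII : ∀ a b : ℝ, IntervalIntegrable (vker s) volume a b := fun a b => by
    rw [intervalIntegrable_iff]
    exact vker_integrableOn s hs _ (by rw [Set.uIoc]; simp)
  set g : ℝ → ℂ := fun t => vker s t * (Real.sign t : ℂ) with hg
  have h0 : ∀ᵐ t : ℝ, t ≠ 0 := by
    rw [MeasureTheory.ae_iff]
    have : {t : ℝ | ¬ t ≠ 0} = {0} := by ext t; simp
    rw [this]
    exact Real.volume_singleton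
  have hneg : ∀ᵐ t : ℝ, t ∈ Set.Ioc (-1:ℝ) 0 → g t = -(vker s t) := by
    filter_upwards [h0] with t ht htm
    have htneg : t < 0 := lt_of_le_of_ne htm.2 ht
    simp [hg, Real.sign_of_neg htneg]
  have hpos : ∀ᵐ t : ℝ, t ∈ Set.Ioc (0:ℝ) 1 → g t = vker s t := by
    filter_upwards with t htm
    simp [hg, Real.sign_of_pos htm.1]
  have hsplit : Omega (fun t : ℝ => (Real.sign t : ℂ)) s =
      (∫ t in Set.Ioc (-1:ℝ) 0, g t) + ∫ t in Set.Ioc (0:ℝ) 1, g t := by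
    show (∫ t in Set.Icc (-1:ℝ) 1, g t) = _
    rw [MeasureTheory.integral_Icc_eq_integral_Ioc]
    rw [← Set.Ioc_union_Ioc_eq_Ioc (by norm_num : (-1:ℝ) ≤ 0) (by norm_num : (0:ℝ) ≤ 1)]
    apply setIntegral_union (Set.Ioc_disjoint_Ioc_of_le le_rfl) measurableSet_Ioc
    · have hneg' : g =ᵐ[volume.restrict (Set.Ioc (-1:ℝ) 0)] (fun t => -(vker s t)) :=
        (ae_restrict_iff' measurableSet_Ioc).2 hneg
      exact IntegrableOn.congr_fun_ae ((hIoc (-1) 0).neg) hneg'.symm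
    · have hpos' : g =ᵐ[volume.restrict (Set.Ioc (0:ℝ) 1)] (fun t => vker s t) :=
        (ae_restrict_iff' measurableSet_Ioc).2 hpos
      exact IntegrableOn.congr_fun_ae (hIoc 0 1) hpos'.symm
  rw [hsplit, setIntegral_congr_ae measurableSet_Ioc hneg,
    setIntegral_congr_ae measurableSet_Ioc hpos, integral_neg]
  have e1 : (∫ t in Set.Ioc (-1:ℝ) 0, vker s t) = ∫ t in (-1:ℝ)..0, vker s t :=
    (intervalIntegral.integral_of_le (by norm_num)).symm
  have e2 : (∫ t in Set.Ioc (0:ℝ) 1, vker s t) = ∫ t in (0:ℝ)..1, vker s t :=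
    (intervalIntegral.integral_of_le (by norm_num)).symm
  rw [e1, e2]
  have e3 : (∫ t in (-1:ℝ)..0, vker s t) = ∫ t in (0:ℝ)..1, vker s (-t) := by
    rw [intervalIntegral.integral_comp_neg (a := 0) (b := 1) (fun t => vker s t)]
    norm_num
  rw [e3]
  have hII2 : IntervalIntegrable (fun t => vker s (-t)) volume 0 1 := by
    rw [intervalIntegrable_iff]
    apply Measure.integrableOn_of_bounded (M := 3 * s ^ 2)
      (by rw [Set.uIoc]; simp)
      (((vker_measurable s).comp measurable_neg).aestronglyMeasurable)
    exact Filter.Eventually.of_forall (fun t => vker_bound s hs (-t))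
  rw [show (-(∫ t in (0:ℝ)..1, vker s (-t)) + ∫ t in (0:ℝ)..1, vker s t)
      = (∫ t in (0:ℝ)..1, vker s t) - ∫ t in (0:ℝ)..1, vker s (-t) by ring,
    ← intervalIntegral.integral_sub (hII 0 1) hII2]
  have e4 : (∫ t in (0:ℝ)..1, (vker s t - vker s (-t)))
      = ∫ t in (0:ℝ)..1, (-2) * Complex.I * (((s * t - Real.sin (s * t)) / t ^ 2 : ℝ) : ℂ) := by
    congr 1; ext t; exact vker_sub s t
  rw [e4, intervalIntegral.integral_const_mul, intervalIntegral.integral_ofReal]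
  have e5 : (∫ t in (0:ℝ)..1, (s * t - Real.sin (s * t)) / t ^ 2)
      = s * ∫ u in (0:ℝ)..s, (u - Real.sin u) / u ^ 2 := by
    have key : ∀ t : ℝ, (s * t - Real.sin (s * t)) / t ^ 2
        = s ^ 2 * ((s * t - Real.sin (s * t)) / (s * t) ^ 2) := by
      intro t
      rcases eq_or_ne t 0 with rfl | ht
      · simp
      · field_simp
    simp_rw [key]
    rw [intervalIntegral.integral_const_mul]
    have := intervalIntegral.smul_integral_comp_mul_left
      (a := 0) (b := 1) (fun u => (u - Real.sin u) / u ^ 2) s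
    simp only [smul_eq_mul, mul_zero, mul_one] at this
    calc s ^ 2 * ∫ t in (0:ℝ)..1, (s * t - Real.sin (s * t)) / (s * t) ^ 2
        = s * (s * ∫ t in (0:ℝ)..1, (s * t - Real.sin (s * t)) / (s * t) ^ 2) := by ring
      _ = s * ∫ u in (0:ℝ)..s, (u - Real.sin u) / u ^ 2 := by rw [this]
  rw [e5]
  push_cast
  ring

lemma G_int01 : IntervalIntegrable (fun u : ℝ => (u - Real.sin u) / u ^ 2) volume 0 1 := by
  rw [intervalIntegrable_iff]
  apply Measure.integrableOn_of_bounded (M := 1)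
    (by rw [Set.uIoc]; simp)
    (by apply Measurable.aestronglyMeasurable; measurability)
  rw [ae_restrict_iff' measurableSet_uIoc]
  filter_upwards with u hu
  rw [Set.uIoc_of_le (by norm_num : (0:ℝ) ≤ 1)] at hu
  obtain ⟨h0, h1⟩ := hu
  have hsin := Real.sin_gt_sub_cube h0
  have hle : Real.sin u ≤ u := le_of_lt (Real.sin_lt h0)
  rw [Real.norm_eq_abs, abs_of_nonneg (div_nonneg (by linarith) (by positivity))]
  rw [div_le_one (by positivity)]
  nlinarith

lemma G_nonneg01 : (0:ℝ) ≤ ∫ u in (0:ℝ)..1, (u - Real.sin u) / u ^ 2 := by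
  apply intervalIntegral.integral_nonneg (by norm_num)
  intro u hu
  rcases eq_or_lt_of_le hu.1 with rfl | h0
  · simp
  · have := Real.sin_lt h0
    exact div_nonneg (by linarith) (by positivity)

lemma log_int (s : ℝ) (hs : 1 < s) :
    (∫ u in (1:ℝ)..s, (u - 1) / u ^ 2) = Real.log s - 1 + 1 / s := by
  have h : ∀ u ∈ Set.uIcc (1:ℝ) s, HasDerivAt (fun x => Real.log x + x⁻¹) ((u - 1) / u ^ 2) u := by
    intro u hu
    rw [Set.uIcc_of_le hs.le] at hu
    have hu0 : u ≠ 0 := by linarith [hu.1]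
    have h1 := Real.hasDerivAt_log hu0
    have h2 := hasDerivAt_inv hu0
    refine (h1.add h2).congr_deriv ?_
    field_simp
    ring
  have hint : IntervalIntegrable (fun u : ℝ => (u - 1) / u ^ 2) volume 1 s := by
    apply ContinuousOn.intervalIntegrable
    apply ContinuousOn.div (by fun_prop) (by fun_prop)
    intro u hu
    rw [Set.uIcc_of_le hs.le] at hu
    have : (1:ℝ) ≤ u := hu.1
    positivity
  rw [intervalIntegral.integral_eq_sub_of_hasDerivAt h hint]
  rw [Real.log_one]
  field_simp
  ring

lemma part2 (s : ℝ) (hs : 1 < s) :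
    Real.log s - 1 + 1 / s ≤ ∫ u in (0:ℝ)..s, (u - Real.sin u) / u ^ 2 := by
  have hGcont : IntervalIntegrable (fun u : ℝ => (u - Real.sin u) / u ^ 2) volume 1 s := by
    apply ContinuousOn.intervalIntegrable
    apply ContinuousOn.div (by fun_prop) (by fun_prop)
    intro u hu
    rw [Set.uIcc_of_le hs.le] at hu
    have : (1:ℝ) ≤ u := hu.1
    positivity
  have hLint : IntervalIntegrable (fun u : ℝ => (u - 1) / u ^ 2) volume 1 s := by
    apply ContinuousOn.intervalIntegrable
    apply ContinuousOn.div (by fun_prop) (by fun_prop)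
    intro u hu
    rw [Set.uIcc_of_le hs.le] at hu
    have : (1:ℝ) ≤ u := hu.1
    positivity
  have hsplit : (∫ u in (0:ℝ)..s, (u - Real.sin u) / u ^ 2)
      = (∫ u in (0:ℝ)..1, (u - Real.sin u) / u ^ 2)
        + ∫ u in (1:ℝ)..s, (u - Real.sin u) / u ^ 2 :=
    (intervalIntegral.integral_add_adjacent_intervals G_int01 hGcont).symm
  have hmono : (∫ u in (1:ℝ)..s, (u - 1) / u ^ 2)
      ≤ ∫ u in (1:ℝ)..s, (u - Real.sin u) / u ^ 2 := by
    apply intervalIntegral.integral_mono_on hs.le hLint hGcont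
    intro u hu
    have hu1 : (1:ℝ) ≤ u := hu.1
    have : Real.sin u ≤ 1 := Real.sin_le_one u
    apply div_le_div_of_nonneg_right ?_ (by positivity)
    · linarith
  rw [hsplit, ← log_int s hs]
  linarith [G_nonneg01]

/-- For `f = sgn` on `[-1,1]`: for every `s > 0`,
`Ω_f(s) = −2is ∫_0^s (u − sin u)/u² du`, and for every `s > 1`,
`|Ω_f(s)| ≥ 2s(log s − 1 + 1/s)`; in particular the bound `Ω_f(s) = O(s log|s|)`
is sharp. -/
theorem Omega_sgn_growth :
    ∀ s : ℝ, (0 < s →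
      Omega (fun t : ℝ => (Real.sign t : ℂ)) s =
        -2 * Complex.I * s * ((∫ u in (0 : ℝ)..s, (u - Real.sin u) / u ^ 2 : ℝ) : ℂ)) ∧
    (1 < s →
      2 * s * (Real.log s - 1 + 1 / s) ≤ ‖Omega (fun t : ℝ => (Real.sign t : ℂ)) s‖) := by
  intro s
  refine ⟨omega_eq s, fun hs => ?_⟩
  have hs0 : 0 < s := lt_trans one_pos hs
  rw [omega_eq s hs0]
  set X : ℝ := ∫ u in (0:ℝ)..s, (u - Real.sin u) / u ^ 2 with hX
  have hnorm : ‖(-2 : ℂ) * Complex.I * s * (X : ℂ)‖ = 2 * s * |X| := by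
    rw [norm_mul, norm_mul, norm_mul, Complex.norm_I, Complex.norm_real, Complex.norm_real,
      Real.norm_eq_abs, Real.norm_eq_abs, abs_of_pos hs0]
    norm_num
  have : (-2 : ℂ) * Complex.I * s * (X : ℂ) = -2 * Complex.I * (s:ℂ) * (X : ℂ) := by ring
  rw [← this, hnorm]
  have h2 := part2 s hs
  have hXle : Real.log s - 1 + 1 / s ≤ |X| := le_trans h2 (le_abs_self X)
  nlinarith [abs_nonneg X]
end

section
/- Let f ∈ L^∞(ℝ). Then for every Schwartz function φ : ℝ → ℂ, ∫_ℝ (Ω_f(s) − Ψ_f(s)) φ''(s) ds = ∫_ℝ f(t) φ̂(t) dt, where φ̂(t) = ∫_ℝ e^{-ist} φ(s) ds. (That is, the tempered distribution f̂ defined by ⟨f̂, φ⟩ = ⟨f, φ̂⟩ equals the second distributional derivative of the continuous function Φ_f = Ω_f − Ψ_f.) -/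
open MeasureTheory Filter Set

/-- `Ψ_f(s) = ∫_{|t|>1} e^{-ist} f(t) t⁻² dt`. -/
noncomputable def Psi (f : ℝ → ℂ) (s : ℝ) : ℂ :=
  ∫ t in {t : ℝ | 1 < |t|}, Complex.exp (-(Complex.I * s * t)) * f t / (t : ℂ) ^ 2

lemma norm_exp_neg_I_mul (a b : ℝ) : ‖Complex.exp (-(Complex.I * a * b))‖ = 1 := by
  rw [Complex.norm_exp]
  simp

lemma key_bound (x : ℝ) :
    ‖1 - Complex.I * x - Complex.exp (-(Complex.I * x))‖ ≤ 3 * x ^ 2 := by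
  have hax : ‖(-(Complex.I * x) : ℂ)‖ = |x| := by
    simp [norm_neg, Complex.norm_def]
  rcases le_or_gt (|x|) 1 with h | h
  · have h2 := Complex.norm_exp_sub_one_sub_id_le (x := -(Complex.I * x))
      (by rw [hax]; exact h)
    have h3 : (1 - Complex.I * x - Complex.exp (-(Complex.I * x)))
        = -(Complex.exp (-(Complex.I * x)) - 1 - (-(Complex.I * x))) := by ring
    rw [h3, norm_neg]
    calc ‖_‖ ≤ ‖(-(Complex.I * x) : ℂ)‖ ^ 2 := h2
      _ = |x| ^ 2 := by rw [hax]
      _ ≤ 3 * x ^ 2 := by rw [sq_abs]; nlinarith [sq_nonneg x]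
  · have h1 : ‖(1 : ℂ) - Complex.I * x - Complex.exp (-(Complex.I * x))‖
        ≤ ‖(1 : ℂ)‖ + ‖(Complex.I * (x:ℂ) : ℂ)‖ + ‖Complex.exp (-(Complex.I * x))‖ :=
      (norm_sub_le _ _).trans (by gcongr; exact norm_sub_le _ _)
    have h2 : ‖(Complex.I * (x:ℂ) : ℂ)‖ = |x| := by simp [Complex.norm_def]
    have h3 : ‖Complex.exp (-(Complex.I * x))‖ = 1 := by
      simpa using norm_exp_neg_I_mul x 1
    rw [h2, h3, norm_one] at h1
    nlinarith [abs_nonneg x, sq_abs x]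

lemma vker_norm_le (s t : ℝ) : ‖vker s t‖ ≤ 3 * s ^ 2 := by
  unfold vker
  split_ifs with h
  · rw [show ((s : ℂ) ^ 2 / 2 : ℂ) = ((s ^ 2 / 2 : ℝ) : ℂ) by push_cast; ring,
      Complex.norm_real, Real.norm_eq_abs, abs_of_nonneg (by positivity)]
    nlinarith [sq_nonneg s]
  · have harg : Complex.I * (s : ℂ) * (t : ℂ) = Complex.I * ((s * t : ℝ) : ℂ) := by
      push_cast; ring
    rw [norm_div, harg]
    have := key_bound (s * t)
    have ht2 : ‖((t : ℂ) ^ 2)‖ = t ^ 2 := by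
      rw [show ((t:ℂ)^2 : ℂ) = ((t^2 : ℝ) : ℂ) by push_cast; ring, Complex.norm_real,
        Real.norm_eq_abs, abs_of_nonneg (by positivity)]
    rw [ht2, div_le_iff₀ (by positivity)]
    calc ‖1 - Complex.I * ((s*t : ℝ):ℂ) - Complex.exp (-(Complex.I * ((s*t:ℝ):ℂ)))‖
        ≤ 3 * (s*t) ^ 2 := this
      _ = 3 * s ^ 2 * t ^ 2 := by ring

lemma integral_deriv_eq_zero'' {g g' : ℝ → ℂ}
    (hd : ∀ x, HasDerivAt g (g' x) x) (hi : Integrable g')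
    (htop : Tendsto g atTop (nhds 0)) (hbot : Tendsto g atBot (nhds 0)) :
    ∫ x, g' x = 0 := by
  have h1 : ∫ x in Iic (0:ℝ), g' x = g 0 - 0 :=
    integral_Iic_of_hasDerivAt_of_tendsto (hd 0).continuousAt.continuousWithinAt
      (fun x _ => hd x) hi.integrableOn hbot
  have h2 : ∫ x in Ioi (0:ℝ), g' x = 0 - g 0 :=
    integral_Ioi_of_hasDerivAt_of_tendsto (hd 0).continuousAt.continuousWithinAt
      (fun x _ => hd x) hi.integrableOn htop
  rw [← intervalIntegral.integral_Iic_add_Ioi hi.integrableOn hi.integrableOn, h1, h2]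
  ring

lemma schwartz_tendsto_zero (ψ : SchwartzMap ℝ ℂ) :
    Tendsto ψ (cocompact ℝ) (nhds 0) :=
  zero_at_infty ψ

lemma schwartz_mul_tendsto_zero (ψ : SchwartzMap ℝ ℂ) :
    Tendsto (fun s : ℝ => (s : ℂ) * ψ s) (cocompact ℝ) (nhds 0) := by
  obtain ⟨C, hC⟩ := ψ.decay 2 0
  apply squeeze_zero_norm' (a := fun s : ℝ => C * ‖s‖⁻¹)
  · filter_upwards [(tendsto_norm_cocompact_atTop).eventually_ge_atTop 1] with s hs
    have hs0 : (0:ℝ) < ‖s‖ := lt_of_lt_of_le one_pos hs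
    rw [norm_mul, Complex.norm_real, mul_comm C, ← div_eq_inv_mul,
      le_div_iff₀ hs0]
    have := hC.2 s
    rw [norm_iteratedFDeriv_zero] at this
    calc ‖s‖ * ‖ψ s‖ * ‖s‖ = ‖s‖ ^ 2 * ‖ψ s‖ := by ring
      _ ≤ C := this
  · have : Tendsto (fun s : ℝ => ‖s‖⁻¹) (cocompact ℝ) (nhds 0) :=
      (tendsto_norm_cocompact_atTop).inv_tendsto_atTop
    simpa using this.const_mul C

lemma hasDerivAt_schwartz (φ : SchwartzMap ℝ ℂ) (s : ℝ) :
    HasDerivAt φ (SchwartzMap.derivCLM ℝ ℂ φ s) s := by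
  rw [SchwartzMap.derivCLM_apply]
  exact (φ.differentiableAt).hasDerivAt

lemma hasDerivAt_cexp_mul (c : ℂ) (s : ℝ) :
    HasDerivAt (fun s : ℝ => Complex.exp (c * s)) (c * Complex.exp (c * s)) s := by
  have h : HasDerivAt (fun s : ℝ => c * (s : ℂ)) c s := by
    simpa using (Complex.ofRealCLM.hasDerivAt (x := s)).const_mul c
  simpa [mul_comm] using h.cexp

lemma inner_Omega (φ : SchwartzMap ℝ ℂ) {t : ℝ} (ht : t ≠ 0) :
    ∫ s : ℝ, vker s t * (SchwartzMap.derivCLM ℝ ℂ (SchwartzMap.derivCLM ℝ ℂ φ)) s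
      = ∫ s : ℝ, Complex.exp (-(Complex.I * t * s)) * φ s := by
  set ψ := SchwartzMap.derivCLM ℝ ℂ φ with hψ
  set ψ₂ := SchwartzMap.derivCLM ℝ ℂ ψ with hψ₂
  set c : ℂ := -(Complex.I * t) with hc
  have ht2 : ((t : ℂ) ^ 2) ≠ 0 := pow_ne_zero 2 (Complex.ofReal_ne_zero.2 ht)
  have hcs : ∀ s : ℝ, c * (s : ℂ) = -(Complex.I * t * s) := fun s => by rw [hc]; ring
  have hexp_norm : ∀ s : ℝ, ‖Complex.exp (c * s)‖ = 1 := by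
    intro s
    rw [hcs s]
    exact norm_exp_neg_I_mul t s
  set G : ℝ → ℂ := fun s =>
    ((t : ℂ) ^ 2)⁻¹ * (ψ s - Complex.I * t * ((s : ℂ) * ψ s - φ s)
      - Complex.exp (c * s) * (ψ s + Complex.I * t * φ s)) with hG
  have hvker : ∀ s : ℝ, vker s t
      = ((t : ℂ) ^ 2)⁻¹ * (1 - Complex.I * s * t - Complex.exp (c * s)) := by
    intro s
    rw [vker, if_neg ht, show -(Complex.I * (s : ℂ) * (t : ℂ)) = c * s by rw [hc]; ring,
      div_eq_inv_mul]
  have hderiv : ∀ s : ℝ, HasDerivAt G (vker s t * ψ₂ s - Complex.exp (c * s) * φ s) s := by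
    intro s
    have h0 : HasDerivAt (fun u : ℝ => φ u) (ψ s) s := hasDerivAt_schwartz φ s
    have h1 : HasDerivAt (fun u : ℝ => ψ u) (ψ₂ s) s := hasDerivAt_schwartz ψ s
    have hid : HasDerivAt (fun u : ℝ => ((u : ℝ) : ℂ)) 1 s := by
      simpa using (hasDerivAt_id s).ofReal_comp
    have h3 : HasDerivAt (fun u : ℝ => (u : ℂ) * ψ u - φ u)
        (1 * ψ s + (s : ℂ) * ψ₂ s - ψ s) s := (hid.mul h1).sub h0
    have h4 := hasDerivAt_cexp_mul c s
    have h5 : HasDerivAt (fun u : ℝ => Complex.exp (c * u) * (ψ u + Complex.I * t * φ u))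
        (c * Complex.exp (c * s) * (ψ s + Complex.I * t * φ s)
          + Complex.exp (c * s) * (ψ₂ s + Complex.I * t * ψ s)) s :=
      h4.mul (h1.add (h0.const_mul (Complex.I * t)))
    have total := ((h1.sub (h3.const_mul (Complex.I * t))).sub h5).const_mul (((t : ℂ) ^ 2)⁻¹)
    refine total.congr_deriv ?_
    rw [hvker s, hc]
    field_simp
    ring_nf
    simp only [Complex.I_sq]
    have hTT : (t : ℂ) ^ 2 * (t : ℂ)⁻¹ ^ 2 = 1 := by
      rw [← mul_pow, mul_inv_cancel₀ (Complex.ofReal_ne_zero.2 ht), one_pow]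
    linear_combination -(Complex.exp (-((t : ℂ) * Complex.I * (s : ℂ))) * φ s) * hTT
  have hcont_vker : Continuous fun s : ℝ => vker s t := by
    have : (fun s : ℝ => vker s t)
        = fun s : ℝ => ((t : ℂ) ^ 2)⁻¹ * (1 - Complex.I * s * t - Complex.exp (c * s)) :=
      funext hvker
    rw [this]; fun_prop
  have hintA : Integrable (fun s : ℝ => vker s t * ψ₂ s) := by
    apply Integrable.mono' ((ψ₂.integrable_pow_mul volume 2).const_mul 3)
      (hcont_vker.mul ψ₂.continuous).aestronglyMeasurable
    refine Filter.Eventually.of_forall fun s => ?_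
    rw [Pi.mul_apply, norm_mul]
    calc ‖vker s t‖ * ‖ψ₂ s‖ ≤ (3 * s ^ 2) * ‖ψ₂ s‖ :=
          mul_le_mul_of_nonneg_right (vker_norm_le s t) (norm_nonneg _)
      _ = 3 * (‖s‖ ^ 2 * ‖ψ₂ s‖) := by rw [Real.norm_eq_abs, sq_abs]; ring
  have hintB : Integrable (fun s : ℝ => Complex.exp (c * s) * φ s) := by
    apply Integrable.mono' (φ.integrable (μ := volume)).norm
      (Continuous.aestronglyMeasurable (by fun_prop))
    refine Filter.Eventually.of_forall fun s => ?_
    rw [norm_mul, hexp_norm s, one_mul]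
  have t1 : Tendsto (fun s : ℝ => ψ s) (cocompact ℝ) (nhds 0) := schwartz_tendsto_zero ψ
  have tφ : Tendsto (fun s : ℝ => φ s) (cocompact ℝ) (nhds 0) := schwartz_tendsto_zero φ
  have t2 : Tendsto (fun s : ℝ => (s : ℂ) * ψ s - φ s) (cocompact ℝ) (nhds 0) := by
    simpa using (schwartz_mul_tendsto_zero ψ).sub tφ
  have t4 : Tendsto (fun s : ℝ => ψ s + Complex.I * t * φ s) (cocompact ℝ) (nhds 0) := by
    simpa using t1.add (tφ.const_mul (Complex.I * t))
  have t3 : Tendsto (fun s : ℝ => Complex.exp (c * s) * (ψ s + Complex.I * t * φ s))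
      (cocompact ℝ) (nhds 0) := by
    apply squeeze_zero_norm (a := fun s : ℝ => ‖ψ s + Complex.I * t * φ s‖)
    · intro s; rw [norm_mul, hexp_norm s, one_mul]
    · exact tendsto_zero_iff_norm_tendsto_zero.mp t4
  have htend : Tendsto G (cocompact ℝ) (nhds 0) := by
    have := ((t1.sub (t2.const_mul (Complex.I * t))).sub t3).const_mul (((t : ℂ) ^ 2)⁻¹)
    simpa using this
  have hzero : ∫ s : ℝ, (vker s t * ψ₂ s - Complex.exp (c * s) * φ s) = 0 :=
    integral_deriv_eq_zero'' hderiv (hintA.sub hintB)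
      (htend.mono_left atTop_le_cocompact) (htend.mono_left atBot_le_cocompact)
  rw [integral_sub hintA hintB, sub_eq_zero] at hzero
  rw [hzero]
  exact integral_congr_ae (Filter.Eventually.of_forall fun s => by simp only [hcs])

lemma inner_Psi (φ : SchwartzMap ℝ ℂ) {t : ℝ} (ht : t ≠ 0) :
    ∫ s : ℝ, -(Complex.exp (-(Complex.I * s * t)) / (t : ℂ) ^ 2)
        * (SchwartzMap.derivCLM ℝ ℂ (SchwartzMap.derivCLM ℝ ℂ φ)) s
      = ∫ s : ℝ, Complex.exp (-(Complex.I * t * s)) * φ s := by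
  set ψ := SchwartzMap.derivCLM ℝ ℂ φ with hψ
  set ψ₂ := SchwartzMap.derivCLM ℝ ℂ ψ with hψ₂
  set c : ℂ := -(Complex.I * t) with hc
  have ht2 : ((t : ℂ) ^ 2) ≠ 0 := pow_ne_zero 2 (Complex.ofReal_ne_zero.2 ht)
  have hcs : ∀ s : ℝ, c * (s : ℂ) = -(Complex.I * t * s) := fun s => by rw [hc]; ring
  have hcs' : ∀ s : ℝ, -(Complex.I * (s : ℂ) * (t : ℂ)) = c * s := fun s => by rw [hc]; ring
  have hexp_norm : ∀ s : ℝ, ‖Complex.exp (c * s)‖ = 1 := by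
    intro s; rw [hcs s]; exact norm_exp_neg_I_mul t s
  set H : ℝ → ℂ := fun s =>
    -(((t : ℂ) ^ 2)⁻¹ * (Complex.exp (c * s) * (ψ s + Complex.I * t * φ s))) with hH
  have hderiv : ∀ s : ℝ, HasDerivAt H
      (-(Complex.exp (-(Complex.I * s * t)) / (t : ℂ) ^ 2) * ψ₂ s
        - Complex.exp (c * s) * φ s) s := by
    intro s
    have h0 : HasDerivAt (fun u : ℝ => φ u) (ψ s) s := hasDerivAt_schwartz φ s
    have h1 : HasDerivAt (fun u : ℝ => ψ u) (ψ₂ s) s := hasDerivAt_schwartz ψ s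
    have h4 := hasDerivAt_cexp_mul c s
    have h5 : HasDerivAt (fun u : ℝ => Complex.exp (c * u) * (ψ u + Complex.I * t * φ u))
        (c * Complex.exp (c * s) * (ψ s + Complex.I * t * φ s)
          + Complex.exp (c * s) * (ψ₂ s + Complex.I * t * ψ s)) s :=
      h4.mul (h1.add (h0.const_mul (Complex.I * t)))
    have total := (h5.const_mul (((t : ℂ) ^ 2)⁻¹)).neg
    refine total.congr_deriv ?_
    rw [hcs' s, hc]
    field_simp
    ring_nf
    simp only [Complex.I_sq]
    have hTT : (t : ℂ) ^ 2 * (t : ℂ)⁻¹ ^ 2 = 1 := by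
      rw [← mul_pow, mul_inv_cancel₀ (Complex.ofReal_ne_zero.2 ht), one_pow]
    linear_combination -(φ s) * hTT
  have hintA : Integrable
      (fun s : ℝ => -(Complex.exp (-(Complex.I * s * t)) / (t : ℂ) ^ 2) * ψ₂ s) := by
    apply Integrable.mono' ((ψ₂.integrable (μ := volume)).norm.const_mul ((t ^ 2)⁻¹))
      (Continuous.aestronglyMeasurable (by fun_prop))
    refine Filter.Eventually.of_forall fun s => ?_
    rw [norm_mul, norm_neg, norm_div, hcs' s, hexp_norm s]
    have : ‖((t : ℂ) ^ 2)‖ = t ^ 2 := by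
      rw [show ((t : ℂ) ^ 2 : ℂ) = ((t ^ 2 : ℝ) : ℂ) by push_cast; ring, Complex.norm_real,
        Real.norm_eq_abs, abs_of_nonneg (by positivity)]
    rw [this, one_div]
  have hintB : Integrable (fun s : ℝ => Complex.exp (c * s) * φ s) := by
    apply Integrable.mono' (φ.integrable (μ := volume)).norm
      (Continuous.aestronglyMeasurable (by fun_prop))
    refine Filter.Eventually.of_forall fun s => ?_
    rw [norm_mul, hexp_norm s, one_mul]
  have t1 : Tendsto (fun s : ℝ => ψ s) (cocompact ℝ) (nhds 0) := schwartz_tendsto_zero ψ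
  have tφ : Tendsto (fun s : ℝ => φ s) (cocompact ℝ) (nhds 0) := schwartz_tendsto_zero φ
  have t4 : Tendsto (fun s : ℝ => ψ s + Complex.I * t * φ s) (cocompact ℝ) (nhds 0) := by
    simpa using t1.add (tφ.const_mul (Complex.I * t))
  have t3 : Tendsto (fun s : ℝ => Complex.exp (c * s) * (ψ s + Complex.I * t * φ s))
      (cocompact ℝ) (nhds 0) := by
    apply squeeze_zero_norm (a := fun s : ℝ => ‖ψ s + Complex.I * t * φ s‖)
    · intro s; rw [norm_mul, hexp_norm s, one_mul]
    · exact tendsto_zero_iff_norm_tendsto_zero.mp t4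
  have htend : Tendsto H (cocompact ℝ) (nhds 0) := by
    have := (t3.const_mul (((t : ℂ) ^ 2)⁻¹)).neg
    simpa using this
  have hzero : ∫ s : ℝ,
      (-(Complex.exp (-(Complex.I * s * t)) / (t : ℂ) ^ 2) * ψ₂ s
        - Complex.exp (c * s) * φ s) = 0 :=
    integral_deriv_eq_zero'' hderiv (hintA.sub hintB)
      (htend.mono_left atTop_le_cocompact) (htend.mono_left atBot_le_cocompact)
  rw [integral_sub hintA hintB, sub_eq_zero] at hzero
  rw [hzero]
  exact integral_congr_ae (Filter.Eventually.of_forall fun s => by simp only [hcs])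

lemma measurable_vker2 : Measurable fun p : ℝ × ℝ => vker p.1 p.2 := by
  unfold vker
  refine Measurable.ite ?_ (by fun_prop) (Measurable.div (by fun_prop) (by fun_prop))
  have : {p : ℝ × ℝ | p.2 = 0} = Prod.snd ⁻¹' {0} := rfl
  rw [this]
  exact measurable_snd (measurableSet_singleton 0)

theorem main_aux (g : ℝ → ℂ) (hgm : StronglyMeasurable g) (C : ℝ) (hC : ∀ t, ‖g t‖ ≤ C)
    (φ : SchwartzMap ℝ ℂ) :
    ∫ s : ℝ, (Omega g s - Psi g s) * deriv (deriv (φ : ℝ → ℂ)) s =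
      ∫ t : ℝ, g t * ∫ s : ℝ, Complex.exp (-(Complex.I * t * s)) * φ s := by
  have hC0 : 0 ≤ C := le_trans (norm_nonneg _) (hC 0)
  set ψ₂ := SchwartzMap.derivCLM ℝ ℂ (SchwartzMap.derivCLM ℝ ℂ φ) with hψ₂
  have hd2 : deriv (deriv (φ : ℝ → ℂ)) = ψ₂ := by
    have h1 : deriv (φ : ℝ → ℂ) = (SchwartzMap.derivCLM ℝ ℂ φ : ℝ → ℂ) :=
      funext fun x => (SchwartzMap.derivCLM_apply (𝕜 := ℝ) φ x).symm
    funext x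
    rw [hψ₂, SchwartzMap.derivCLM_apply, h1]
  set S : Set ℝ := {t : ℝ | 1 < |t|} with hS
  have hSmeas : MeasurableSet S := (isOpen_lt continuous_const continuous_abs).measurableSet
  set K : ℝ → ℝ → ℂ := fun s t =>
    (if |t| ≤ 1 then vker s t else -(Complex.exp (-(Complex.I * s * t)) / (t : ℂ) ^ 2)) * g t
    with hK
  have ht2norm : ∀ t : ℝ, ‖((t : ℂ) ^ 2)‖ = t ^ 2 := by
    intro t
    rw [show ((t : ℂ) ^ 2 : ℂ) = ((t ^ 2 : ℝ) : ℂ) by push_cast; ring, Complex.norm_real,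
      Real.norm_eq_abs, abs_of_nonneg (by positivity)]
  -- step A
  have hint1 : ∀ s : ℝ, IntegrableOn (fun t => vker s t * g t) (Icc (-1 : ℝ) 1) := by
    intro s
    apply Integrable.mono'
      (show IntegrableOn (fun _ : ℝ => 3 * s ^ 2 * C) (Icc (-1 : ℝ) 1) volume from
        integrableOn_const measure_Icc_lt_top.ne)
      (((measurable_vker2.comp (measurable_const.prodMk measurable_id)).mul
        hgm.measurable).aestronglyMeasurable.restrict)
    refine Filter.Eventually.of_forall fun t => ?_
    rw [Pi.mul_apply, norm_mul]
    exact mul_le_mul (vker_norm_le s t) (hC t) (norm_nonneg _) (by positivity)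
  have hint2 : ∀ s : ℝ, IntegrableOn
      (fun t : ℝ => Complex.exp (-(Complex.I * s * t)) * g t / (t : ℂ) ^ 2) S := by
    intro s
    have hgμ : Measurable g := hgm.measurable
    apply Integrable.mono' ((integrable_inv_one_add_sq.const_mul (2 * C)).restrict (s := S))
      ((Measurable.aestronglyMeasurable (by fun_prop :
        Measurable fun t : ℝ => Complex.exp (-(Complex.I * s * t)) * g t / (t : ℂ) ^ 2)).restrict)
    · rw [ae_restrict_iff' hSmeas]
      refine Filter.Eventually.of_forall fun t htS => ?_
      have h1t : 1 < |t| := htS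
      have h1 : (1 : ℝ) ≤ t ^ 2 := by nlinarith [sq_abs t, abs_nonneg t]
      have ht2pos : (0 : ℝ) < t ^ 2 := by linarith
      rw [norm_div, norm_mul, norm_exp_neg_I_mul s t, one_mul, ht2norm t]
      have e1 : ‖g t‖ / t ^ 2 ≤ C / t ^ 2 := by gcongr; exact hC t
      have e2 : C / t ^ 2 ≤ 2 * C * (1 + t ^ 2)⁻¹ := by
        rw [show 2 * C * (1 + t ^ 2)⁻¹ = 2 * C / (1 + t ^ 2) by ring,
          div_le_div_iff₀ ht2pos (by positivity)]
        nlinarith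
      exact e1.trans e2
  have hstepA : ∀ s : ℝ, Omega g s - Psi g s = ∫ t, K s t := by
    intro s
    have h1 : Omega g s = ∫ t, (Icc (-1 : ℝ) 1).indicator (fun t => vker s t * g t) t := by
      rw [Omega, ← integral_indicator measurableSet_Icc]
    have h2 : Psi g s = ∫ t, S.indicator
        (fun t => Complex.exp (-(Complex.I * s * t)) * g t / (t : ℂ) ^ 2) t := by
      rw [Psi, ← integral_indicator hSmeas]
    rw [h1, h2, ← integral_sub ((integrable_indicator_iff measurableSet_Icc).2 (hint1 s))
      ((integrable_indicator_iff hSmeas).2 (hint2 s))]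
    refine integral_congr_ae (Filter.Eventually.of_forall fun t => ?_)
    by_cases h : |t| ≤ 1
    · have htIcc : t ∈ Icc (-1 : ℝ) 1 := abs_le.1 h
      have htS : t ∉ S := not_lt.2 h
      simp only [Set.indicator_of_mem htIcc, Set.indicator_of_notMem htS, hK]
      rw [if_pos h]
      ring
    · have htIcc : t ∉ Icc (-1 : ℝ) 1 := fun hmem => h (abs_le.2 hmem)
      have htS : t ∈ S := not_le.1 h
      simp only [Set.indicator_of_notMem htIcc, Set.indicator_of_mem htS, hK]
      rw [if_neg h]
      ring
  -- Fubini integrability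
  have hPmeas : Measurable fun p : ℝ × ℝ => K p.1 p.2 * ψ₂ p.1 := by
    apply Measurable.mul
    · apply Measurable.mul
      · apply Measurable.ite
        · have : {p : ℝ × ℝ | |p.2| ≤ 1} = (fun p : ℝ × ℝ => |p.2|) ⁻¹' (Iic 1) := rfl
          rw [this]
          exact (measurable_snd.abs) measurableSet_Iic
        · exact measurable_vker2
        · exact Measurable.neg (Measurable.div (by fun_prop) (by fun_prop))
      · exact hgm.measurable.comp measurable_snd
    · exact ψ₂.continuous.measurable.comp measurable_fst
  have hFub : Integrable (Function.uncurry fun s t => K s t * ψ₂ s)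
      ((volume : Measure ℝ).prod (volume : Measure ℝ)) := by
    have hf₁ : Integrable (fun s : ℝ => (3 * C) * (‖s‖ ^ 2 * ‖ψ₂ s‖)) :=
      (ψ₂.integrable_pow_mul volume 2).const_mul (3 * C)
    have hg₁ : Integrable ((Icc (-1 : ℝ) 1).indicator fun _ => (1 : ℝ)) :=
      (integrable_indicator_iff measurableSet_Icc).2
        (integrableOn_const measure_Icc_lt_top.ne)
    have hf₂ : Integrable (fun s : ℝ => (2 * C) * ‖ψ₂ s‖) :=
      (ψ₂.integrable (μ := volume)).norm.const_mul (2 * C)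
    have hg₂ : Integrable (fun t : ℝ => (1 + t ^ 2)⁻¹) := integrable_inv_one_add_sq
    have hD : Integrable (fun p : ℝ × ℝ =>
        ((3 * C) * (‖p.1‖ ^ 2 * ‖ψ₂ p.1‖)) * (Icc (-1 : ℝ) 1).indicator (fun _ => (1 : ℝ)) p.2
          + ((2 * C) * ‖ψ₂ p.1‖) * (1 + p.2 ^ 2)⁻¹) :=
      (hf₁.mul_prod hg₁).add (hf₂.mul_prod hg₂)
    apply Integrable.mono' hD hPmeas.aestronglyMeasurable
    refine Filter.Eventually.of_forall fun p => ?_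
    obtain ⟨s, t⟩ := p
    simp only [Function.uncurry, hK]
    by_cases h : |t| ≤ 1
    · have htIcc : t ∈ Icc (-1 : ℝ) 1 := abs_le.1 h
      rw [Set.indicator_of_mem htIcc, if_pos h]
      have : ‖vker s t * g t * ψ₂ s‖ ≤ (3 * C) * (‖s‖ ^ 2 * ‖ψ₂ s‖) := by
        rw [norm_mul, norm_mul]
        calc ‖vker s t‖ * ‖g t‖ * ‖ψ₂ s‖ ≤ (3 * s ^ 2) * C * ‖ψ₂ s‖ := by
              apply mul_le_mul_of_nonneg_right _ (norm_nonneg _)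
              exact mul_le_mul (vker_norm_le s t) (hC t) (norm_nonneg _) (by positivity)
          _ = (3 * C) * (‖s‖ ^ 2 * ‖ψ₂ s‖) := by rw [Real.norm_eq_abs, sq_abs]; ring
      refine this.trans ?_
      have : (0:ℝ) ≤ ((2 * C) * ‖ψ₂ s‖) * (1 + t ^ 2)⁻¹ := by positivity
      linarith
    · have htIcc : t ∉ Icc (-1 : ℝ) 1 := fun hmem => h (abs_le.2 hmem)
      rw [Set.indicator_of_notMem htIcc, if_neg h]
      have h1t : 1 < |t| := not_le.1 h
      have h1 : (1 : ℝ) ≤ t ^ 2 := by nlinarith [sq_abs t, abs_nonneg t]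
      have ht2pos : (0 : ℝ) < t ^ 2 := by linarith
      have : ‖-(Complex.exp (-(Complex.I * s * t)) / (t : ℂ) ^ 2) * g t * ψ₂ s‖
          ≤ ((2 * C) * ‖ψ₂ s‖) * (1 + t ^ 2)⁻¹ := by
        rw [norm_mul, norm_mul, norm_neg, norm_div, norm_exp_neg_I_mul s t, ht2norm t, one_div]
        calc (t ^ 2)⁻¹ * ‖g t‖ * ‖ψ₂ s‖ ≤ (t ^ 2)⁻¹ * C * ‖ψ₂ s‖ := by
              apply mul_le_mul_of_nonneg_right _ (norm_nonneg _)
              exact mul_le_mul_of_nonneg_left (hC t) (by positivity)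
          _ ≤ ((2 * C) * ‖ψ₂ s‖) * (1 + t ^ 2)⁻¹ := by
              rw [show ((2 * C) * ‖ψ₂ s‖) * (1 + t ^ 2)⁻¹
                  = ((1 + t ^ 2)⁻¹ * (2 * C)) * ‖ψ₂ s‖ by ring]
              apply mul_le_mul_of_nonneg_right _ (norm_nonneg _)
              rw [show (t ^ 2)⁻¹ * C = C / t ^ 2 by ring,
                show (1 + t ^ 2)⁻¹ * (2 * C) = 2 * C / (1 + t ^ 2) by ring,
                div_le_div_iff₀ ht2pos (by positivity)]
              nlinarith
      refine this.trans ?_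
      have : (0:ℝ) ≤ ((3 * C) * (‖s‖ ^ 2 * ‖ψ₂ s‖))
          * (Icc (-1 : ℝ) 1).indicator (fun _ => (1 : ℝ)) t := by
        apply mul_nonneg (by positivity)
        exact Set.indicator_nonneg (fun _ _ => zero_le_one) t
      linarith
  -- chain
  have h0 : ∀ᵐ t : ℝ, t ≠ 0 := by
    rw [ae_iff]
    simpa [not_not] using measure_singleton (0 : ℝ)
  calc ∫ s : ℝ, (Omega g s - Psi g s) * deriv (deriv (φ : ℝ → ℂ)) s
      = ∫ s : ℝ, ∫ t : ℝ, K s t * ψ₂ s := by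
        rw [hd2]
        refine integral_congr_ae (Filter.Eventually.of_forall fun s => ?_)
        show (Omega g s - Psi g s) * ψ₂ s = ∫ t : ℝ, K s t * ψ₂ s
        rw [hstepA s, ← integral_mul_const]
    _ = ∫ t : ℝ, ∫ s : ℝ, K s t * ψ₂ s := integral_integral_swap hFub
    _ = ∫ t : ℝ, g t * ∫ s : ℝ, Complex.exp (-(Complex.I * t * s)) * φ s := by
        refine integral_congr_ae ?_
        filter_upwards [h0] with t ht0
        by_cases h : |t| ≤ 1
        · calc ∫ s : ℝ, K s t * ψ₂ s = ∫ s : ℝ, g t * (vker s t * ψ₂ s) := by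
                refine integral_congr_ae (Filter.Eventually.of_forall fun s => ?_)
                simp only [hK]
                rw [if_pos h]
                ring
            _ = g t * ∫ s : ℝ, vker s t * ψ₂ s := integral_const_mul _ _
            _ = g t * ∫ s : ℝ, Complex.exp (-(Complex.I * t * s)) * φ s := by
                rw [hψ₂, inner_Omega φ ht0]
        · calc ∫ s : ℝ, K s t * ψ₂ s
              = ∫ s : ℝ, g t * (-(Complex.exp (-(Complex.I * s * t)) / (t : ℂ) ^ 2) * ψ₂ s) := by
                refine integral_congr_ae (Filter.Eventually.of_forall fun s => ?_)
                simp only [hK]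
                rw [if_neg h]
                ring
            _ = g t * ∫ s : ℝ, -(Complex.exp (-(Complex.I * s * t)) / (t : ℂ) ^ 2) * ψ₂ s :=
                integral_const_mul _ _
            _ = g t * ∫ s : ℝ, Complex.exp (-(Complex.I * t * s)) * φ s := by
                rw [hψ₂, inner_Psi φ ht0]

/-- For `f ∈ L^∞(ℝ)` and every Schwartz function `φ`,
`∫ (Ω_f(s) − Ψ_f(s)) φ''(s) ds = ∫ f(t) φ̂(t) dt` with
`φ̂(t) = ∫ e^{-ist} φ(s) ds`: the tempered distribution `f̂` is the second
distributional derivative of the continuous function `Φ_f = Ω_f − Ψ_f`. -/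
theorem fourier_transform_eq_second_distributional_deriv
    (f : ℝ → ℂ) (hf : MemLp f ⊤ (volume : Measure ℝ)) (φ : SchwartzMap ℝ ℂ) :
    ∫ s : ℝ, (Omega f s - Psi f s) * deriv (deriv (φ : ℝ → ℂ)) s =
      ∫ t : ℝ, f t * ∫ s : ℝ, Complex.exp (-(Complex.I * t * s)) * φ s := by
  set C₀ : ℝ := (eLpNormEssSup f volume).toReal with hC₀
  have hfin : eLpNormEssSup f volume ≠ ⊤ := by
    have h := hf.2
    rw [eLpNorm_exponent_top] at h
    exact h.ne
  have hae : ∀ᵐ t : ℝ, ‖f t‖ ≤ C₀ := by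
    filter_upwards [ae_le_eLpNormEssSup (f := f) (μ := volume)] with t ht
    have := ENNReal.toReal_mono hfin ht
    simpa using this
  set f₀ := hf.1.mk f with hf₀def
  have hf₀meas : StronglyMeasurable f₀ := hf.1.stronglyMeasurable_mk
  have hff₀ : f =ᵐ[volume] f₀ := hf.1.ae_eq_mk
  have hae₀ : ∀ᵐ t : ℝ, ‖f₀ t‖ ≤ C₀ := by
    filter_upwards [hae, hff₀] with t h1 h2
    rw [← h2]; exact h1
  set g : ℝ → ℂ := fun t => if ‖f₀ t‖ ≤ C₀ then f₀ t else 0 with hg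
  have hgm : StronglyMeasurable g := by
    apply StronglyMeasurable.ite ?_ hf₀meas stronglyMeasurable_const
    exact measurableSet_le hf₀meas.measurable.norm measurable_const
  have hfg : f =ᵐ[volume] g := by
    filter_upwards [hff₀, hae₀] with t h1 h2
    simp only [hg]
    rw [if_pos h2]
    exact h1
  have hCg : ∀ t, ‖g t‖ ≤ max C₀ 0 := by
    intro t
    simp only [hg]
    split_ifs with h
    · exact h.trans (le_max_left _ _)
    · simp
  have key := main_aux g hgm (max C₀ 0) hCg φ
  have hOmega : ∀ s, Omega f s = Omega g s := by
    intro s; rw [Omega, Omega]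
    exact integral_congr_ae (ae_restrict_of_ae (hfg.mono fun t ht => by simp only [ht]))
  have hPsi : ∀ s, Psi f s = Psi g s := by
    intro s; rw [Psi, Psi]
    exact integral_congr_ae (ae_restrict_of_ae (hfg.mono fun t ht => by simp only [ht]))
  calc ∫ s : ℝ, (Omega f s - Psi f s) * deriv (deriv (φ : ℝ → ℂ)) s
      = ∫ s : ℝ, (Omega g s - Psi g s) * deriv (deriv (φ : ℝ → ℂ)) s := by
        refine integral_congr_ae (Filter.Eventually.of_forall fun s => ?_)
        simp only [hOmega s, hPsi s]
    _ = ∫ t : ℝ, g t * ∫ s : ℝ, Complex.exp (-(Complex.I * t * s)) * φ s := key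
    _ = ∫ t : ℝ, f t * ∫ s : ℝ, Complex.exp (-(Complex.I * t * s)) * φ s := by
        refine integral_congr_ae ?_
        filter_upwards [hfg] with t ht
        simp only [ht]
end

section
/- Let h : ℝ → ℂ be a function of bounded variation on ℝ with h ∈ L¹(ℝ), and define g(x) = ∫_{-∞}^{x} h(t) dt. Assume g ∈ L¹(ℝ). Then ∫_ℝ |ĝ(s)| ds ≤ 2(‖g‖₁ + var(h)), where ĝ(s) = ∫_ℝ e^{-ist} g(t) dt. Consequently, for every f ∈ L^∞(ℝ), |∫_ℝ f(t) ĝ(t) dt| ≤ 2 ‖f‖_∞ (‖g‖₁ + var(h)). -/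
open MeasureTheory Set Complex Filter


lemma tsum_edist_le_var (h : ℝ → ℂ) (v b : ℝ) (hb : 0 < b) :
    (∑' k : ℤ, edist (h (v + ((k:ℝ)-1)*b)) (h (v + (k:ℝ)*b))) ≤ eVariationOn h Set.univ := by
  rw [ENNReal.tsum_eq_iSup_sum]
  refine iSup_le fun F => ?_
  set N : ℕ := F.sup fun k => k.natAbs with hN
  have hFsub : F ⊆ Finset.Icc (-(N:ℤ)) (N:ℤ) := by
    intro k hk
    have : k.natAbs ≤ N := Finset.le_sup (f := fun k : ℤ => k.natAbs) hk
    simp only [Finset.mem_Icc]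
    omega
  refine le_trans (Finset.sum_le_sum_of_subset hFsub) ?_
  set u : ℕ → ℝ := fun i => v + ((i:ℝ) - 1 - N) * b with hu
  have hmono : Monotone u := by
    intro i j hij
    simp only [hu]
    have : ((i:ℝ) - 1 - N) ≤ ((j:ℝ) - 1 - N) := by
      have : (i:ℝ) ≤ j := by exact_mod_cast hij
      linarith
    nlinarith
  have key := eVariationOn.sum_le (f := h) (n := 2*N+1) hmono (fun i => Set.mem_univ _)
  refine le_trans ?_ key
  rw [show Finset.Icc (-(N:ℤ)) (N:ℤ) = (Finset.range (2*N+1)).image (fun i : ℕ => (i:ℤ) - N) by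
    ext k
    simp only [Finset.mem_image, Finset.mem_Icc, Finset.mem_range]
    constructor
    · rintro ⟨h1, h2⟩; exact ⟨(k + N).toNat, by omega, by omega⟩
    · rintro ⟨i, hi, rfl⟩; omega]
  rw [Finset.sum_image (by intros a _ b _ hab; simp only [sub_left_inj, Nat.cast_inj] at hab; omega)]
  refine Finset.sum_le_sum fun i _ => le_of_eq ?_
  rw [edist_comm]
  congr 2
  · simp only [hu]; push_cast; ring
  · simp only [hu]; push_cast; ring


lemma lintegral_shift_le_var (h : ℝ → ℂ) (hm : AEMeasurable h volume) (b : ℝ) (hb : 0 < b) :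
    ∫⁻ u : ℝ, (‖h u - h (u - b)‖₊ : ENNReal) ≤ ENNReal.ofReal b * eVariationOn h Set.univ := by
  set φ : ℝ → ENNReal := fun u => (‖h u - h (u - b)‖₊ : ENNReal) with hφ
  have hφm : AEMeasurable φ volume := by
    refine ((hm.sub (hm.comp_quasiMeasurePreserving ?_)).enorm)
    exact (measurePreserving_sub_right volume b).quasiMeasurePreserving
  have hcover : (⋃ k : ℤ, Ioc ((k:ℝ) * b) (((k:ℝ)+1) * b)) = univ := by
    have := iUnion_Ioc_zsmul hb
    simpa [zsmul_eq_mul, add_mul, Int.cast_add, Int.cast_one] using this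
  have hdisj : Pairwise (Function.onFun Disjoint fun k : ℤ => Ioc ((k:ℝ) * b) (((k:ℝ)+1) * b)) := by
    have := pairwise_disjoint_Ioc_zsmul (b := b)
    simpa [zsmul_eq_mul, add_mul, Int.cast_add, Int.cast_one] using this
  calc ∫⁻ u : ℝ, φ u
      = ∫⁻ u in ⋃ k : ℤ, Ioc ((k:ℝ) * b) (((k:ℝ)+1) * b), φ u := by
        rw [hcover, Measure.restrict_univ]
    _ = ∑' k : ℤ, ∫⁻ u in Ioc ((k:ℝ) * b) (((k:ℝ)+1) * b), φ u :=
        lintegral_iUnion (fun k => measurableSet_Ioc) hdisj φ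
    _ = ∑' k : ℤ, ∫⁻ v in Ioc 0 b, φ (v + (k:ℝ) * b) := by
        refine tsum_congr fun k => ?_
        rw [← lintegral_indicator measurableSet_Ioc, ← lintegral_indicator measurableSet_Ioc,
          ← lintegral_add_right_eq_self (fun u => (Ioc ((k:ℝ) * b) (((k:ℝ)+1) * b)).indicator φ u) ((k:ℝ)*b)]
        congr 1
        ext v
        by_cases hv : v ∈ Ioc (0:ℝ) b
        · rw [Set.indicator_of_mem hv, Set.indicator_of_mem]
          simp only [mem_Ioc] at hv ⊢
          constructor <;> linarith [hv.1, hv.2]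
        · rw [Set.indicator_of_notMem hv, Set.indicator_of_notMem]
          simp only [mem_Ioc, not_and_or, not_le, not_lt] at hv ⊢
          rcases hv with h1 | h1
          · left; linarith
          · right; linarith
    _ = ∫⁻ v in Ioc 0 b, ∑' k : ℤ, φ (v + (k:ℝ) * b) := by
        refine (lintegral_tsum fun k => ?_).symm
        exact ((hφm.comp_quasiMeasurePreserving
          (measurePreserving_add_right volume ((k:ℝ)*b)).quasiMeasurePreserving).restrict)
    _ ≤ ∫⁻ _ in Ioc 0 b, eVariationOn h Set.univ := by
        refine lintegral_mono fun v => ?_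
        calc ∑' k : ℤ, φ (v + (k:ℝ) * b)
            = ∑' k : ℤ, edist (h (v + ((k:ℝ)-1)*b)) (h (v + (k:ℝ)*b)) := by
              refine tsum_congr fun k => ?_
              rw [edist_comm, edist_nndist, nndist_eq_nnnorm]
              simp only [hφ]
              congr 3
              ring
          _ ≤ eVariationOn h Set.univ := tsum_edist_le_var h v b hb
    _ = ENNReal.ofReal b * eVariationOn h Set.univ := by
        rw [setLIntegral_const, Real.volume_Ioc, mul_comm]
        simp [hb.le]

lemma swap_bound (ψ : ℝ → ENNReal) (hψ : AEMeasurable ψ volume) {a : ℝ} (ha : 0 < a) :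
    ∫⁻ t : ℝ, ∫⁻ u in Ioc (t-a) t, ψ u ≤ ENNReal.ofReal a * ∫⁻ u, ψ u := by
  obtain ⟨ψ', hψ'm, hae⟩ := hψ
  have h1 : ∀ t : ℝ, ∫⁻ u in Ioc (t-a) t, ψ u = ∫⁻ u in Ioc (t-a) t, ψ' u := by
    intro t
    exact lintegral_congr_ae (ae_restrict_of_ae hae)
  have hS : MeasurableSet {p : ℝ × ℝ | p.1 - a < p.2 ∧ p.2 ≤ p.1} := by
    apply MeasurableSet.inter
    · exact measurableSet_lt (measurable_fst.sub measurable_const) measurable_snd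
    · exact measurableSet_le measurable_snd measurable_fst
  have hFm : Measurable fun p : ℝ × ℝ => ({p : ℝ × ℝ | p.1 - a < p.2 ∧ p.2 ≤ p.1}.indicator
      (fun q => ψ' q.2) p) := (hψ'm.comp measurable_snd).indicator hS
  calc ∫⁻ t : ℝ, ∫⁻ u in Ioc (t-a) t, ψ u
      = ∫⁻ t : ℝ, ∫⁻ u, ({p : ℝ × ℝ | p.1 - a < p.2 ∧ p.2 ≤ p.1}.indicator
          (fun q => ψ' q.2) (t, u)) := by
        refine lintegral_congr fun t => ?_
        rw [h1 t, ← lintegral_indicator measurableSet_Ioc]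
        refine lintegral_congr fun u => ?_
        by_cases hu : u ∈ Ioc (t-a) t
        · rw [indicator_of_mem hu, indicator_of_mem]
          exact hu
        · rw [indicator_of_notMem hu, indicator_of_notMem]
          exact hu
    _ = ∫⁻ u : ℝ, ∫⁻ t, ({p : ℝ × ℝ | p.1 - a < p.2 ∧ p.2 ≤ p.1}.indicator
          (fun q => ψ' q.2) (t, u)) := lintegral_lintegral_swap hFm.aemeasurable
    _ = ∫⁻ u : ℝ, ψ' u * ENNReal.ofReal a := by
        refine lintegral_congr fun u => ?_
        have : ∀ t : ℝ, ({p : ℝ × ℝ | p.1 - a < p.2 ∧ p.2 ≤ p.1}.indicator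
            (fun q => ψ' q.2) (t, u)) = (Ico u (u+a)).indicator (fun _ => ψ' u) t := by
          intro t
          by_cases ht : t ∈ Ico u (u+a)
          · rw [indicator_of_mem ht, indicator_of_mem]
            simp only [mem_Ico] at ht
            constructor <;> [linarith [ht.2]; exact ht.1]
          · rw [indicator_of_notMem ht, indicator_of_notMem]
            simp only [mem_Ico, not_and_or, not_le, not_lt] at ht ⊢
            intro hc
            rcases ht with h1 | h1
            · exact absurd hc.2 (not_le.mpr (by linarith))
            · exact absurd hc.1 (not_lt.mpr (by linarith))
        simp_rw [this]
        rw [lintegral_indicator measurableSet_Ico, setLIntegral_const, Real.volume_Ico]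
        simp
    _ = ENNReal.ofReal a * ∫⁻ u, ψ' u := by
        rw [lintegral_mul_const _ hψ'm, mul_comm]
    _ = ENNReal.ofReal a * ∫⁻ u, ψ u := by rw [lintegral_congr_ae hae.symm]
    _ ≤ ENNReal.ofReal a * ∫⁻ u, ψ u := le_rfl



lemma norm_E (s t : ℝ) : ‖Complex.exp (-(Complex.I * s * t))‖ = 1 := by
  rw [Complex.norm_exp]
  simp [Complex.mul_re]

lemma key_bound_s14 (h : ℝ → ℂ) (hBV : BoundedVariationOn h Set.univ)
    (hL1 : Integrable h (volume : Measure ℝ))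
    (g : ℝ → ℂ) (hg : ∀ x : ℝ, g x = ∫ t in Set.Iic x, h t)
    (hgL1 : Integrable g (volume : Measure ℝ)) (s a b : ℝ) (ha : 0 < a) (hb : 0 < b) :
    ‖1 - Complex.exp (-(Complex.I*s*a))‖ * ‖1 - Complex.exp (-(Complex.I*s*b))‖ *
      ‖∫ t : ℝ, Complex.exp (-(Complex.I * s * t)) * g t‖ ≤
      a * b * (eVariationOn h Set.univ).toReal := by
  set E : ℝ → ℂ := fun t => Complex.exp (-(Complex.I * s * t)) with hE
  set G : ℂ := ∫ t : ℝ, E t * g t with hG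
  -- integrability of shifted products
  have hInt : ∀ c : ℝ, Integrable (fun t : ℝ => E t * g (t - c)) volume := by
    intro c
    refine (hgL1.comp_sub_right c).bdd_mul ?_ (Filter.Eventually.of_forall fun t => le_of_eq (norm_E s t))
    exact (Complex.continuous_exp.comp (by continuity)).aestronglyMeasurable
  -- shift formula
  have hshift : ∀ c : ℝ, (∫ t : ℝ, E t * g (t - c)) = Complex.exp (-(Complex.I*s*c)) * G := by
    intro c
    have h0 := integral_add_right_eq_self (μ := volume) (fun t : ℝ => E t * g (t - c)) c
    have h1 : ∀ x : ℝ, E (x + c) * g (x + c - c)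
        = Complex.exp (-(Complex.I*s*c)) * (E x * g x) := by
      intro x
      have : -(Complex.I * s * (x + c : ℝ)) = -(Complex.I*s*c) + -(Complex.I*s*x) := by
        push_cast; ring
      simp only [hE, add_sub_cancel_right, this, Complex.exp_add]
      ring
    rw [← h0]
    simp_rw [h1]
    rw [integral_const_mul]
  -- second difference
  set D : ℝ → ℂ := fun t => g t - g (t-a) - g (t-b) + g (t-(a+b)) with hD
  have hIntD : Integrable D volume := by
    exact (((hgL1.sub (hgL1.comp_sub_right a)).sub (hgL1.comp_sub_right b)).add
      (hgL1.comp_sub_right (a+b)))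
  have hInt0 : Integrable (fun t : ℝ => E t * g t) volume := by simpa using hInt 0
  have hIdent : (1 - Complex.exp (-(Complex.I*s*a))) * (1 - Complex.exp (-(Complex.I*s*b))) * G
      = ∫ t : ℝ, E t * D t := by
    have expand : ∀ t : ℝ, E t * D t = E t * g t - E t * g (t-a) - E t * g (t-b)
        + E t * g (t-(a+b)) := by intro t; simp only [hD]; ring
    rw [show (∫ t : ℝ, E t * D t) = (∫ t : ℝ, (E t * g t - E t * g (t-a) - E t * g (t-b)
        + E t * g (t-(a+b)))) from integral_congr_ae (Filter.Eventually.of_forall expand)]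
    have hI2 : Integrable (fun t : ℝ => E t * g t - E t * g (t-a)) volume := hInt0.sub (hInt a)
    have hI3 : Integrable (fun t : ℝ => E t * g t - E t * g (t-a) - E t * g (t-b)) volume :=
      hI2.sub (hInt b)
    rw [integral_add hI3 (hInt (a+b)), integral_sub hI2 (hInt b), integral_sub hInt0 (hInt a)]
    have e0 : (∫ t : ℝ, E t * g t) = G := rfl
    rw [e0, hshift a, hshift b, hshift (a+b)]
    have : Complex.exp (-(Complex.I*s*(((a+b : ℝ)) : ℂ))) =
        Complex.exp (-(Complex.I*s*a)) * Complex.exp (-(Complex.I*s*b)) := by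
      rw [← Complex.exp_add]; congr 1; push_cast; ring
    rw [this]; ring
  -- D as interval integral
  have hDint : ∀ t : ℝ, D t = ∫ u in (t-a)..t, (h u - h (u - b)) := by
    intro t
    have d1 : g t - g (t-a) = ∫ u in (t-a)..t, h u := by
      rw [hg t, hg (t-a),
        intervalIntegral.integral_Iic_sub_Iic hL1.integrableOn hL1.integrableOn]
    have d2 : g (t-b) - g (t-(a+b)) = ∫ u in (t-a)..t, h (u - b) := by
      have e : t - (a+b) = t - a - b := by ring
      rw [hg (t-b), hg (t-(a+b)), e,
        intervalIntegral.integral_Iic_sub_Iic hL1.integrableOn hL1.integrableOn,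
        intervalIntegral.integral_comp_sub_right (fun u => h u) b]
    rw [intervalIntegral.integral_sub hL1.intervalIntegrable
      ((hL1.comp_sub_right b).intervalIntegrable), ← d1, ← d2]
    simp only [hD]; ring
  -- lintegral bound on D
  set ψ : ℝ → ENNReal := fun u => (‖h u - h (u - b)‖₊ : ENNReal) with hψ
  have hψm : AEMeasurable ψ volume := by
    refine ((hL1.aemeasurable.sub (hL1.aemeasurable.comp_quasiMeasurePreserving ?_)).enorm)
    exact (measurePreserving_sub_right volume b).quasiMeasurePreserving
  have hDbound : ∀ t : ℝ, (‖D t‖₊ : ENNReal) ≤ ∫⁻ u in Ioc (t-a) t, ψ u := by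
    intro t
    rw [hDint t, intervalIntegral.integral_of_le (by linarith : t - a ≤ t)]
    calc (‖∫ u in Ioc (t-a) t, (h u - h (u-b))‖₊ : ENNReal)
        = ENNReal.ofReal ‖∫ u in Ioc (t-a) t, (h u - h (u-b))‖ :=
          (ofReal_norm_eq_enorm _).symm
      _ ≤ ENNReal.ofReal ((∫⁻ u in Ioc (t-a) t, ENNReal.ofReal ‖h u - h (u-b)‖).toReal) :=
          ENNReal.ofReal_le_ofReal (norm_integral_le_lintegral_norm _)
      _ ≤ ∫⁻ u in Ioc (t-a) t, ENNReal.ofReal ‖h u - h (u-b)‖ := ENNReal.ofReal_toReal_le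
      _ = ∫⁻ u in Ioc (t-a) t, ψ u := by
          refine lintegral_congr fun u => ?_
          exact ofReal_norm_eq_enorm _
  have main : ∫⁻ t : ℝ, (‖D t‖₊ : ENNReal) ≤
      ENNReal.ofReal a * (ENNReal.ofReal b * eVariationOn h Set.univ) :=
    calc ∫⁻ t : ℝ, (‖D t‖₊ : ENNReal) ≤ ∫⁻ t : ℝ, ∫⁻ u in Ioc (t-a) t, ψ u :=
          lintegral_mono hDbound
      _ ≤ ENNReal.ofReal a * ∫⁻ u, ψ u := swap_bound ψ hψm ha
      _ ≤ ENNReal.ofReal a * (ENNReal.ofReal b * eVariationOn h Set.univ) := by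
          exact mul_le_mul_right (lintegral_shift_le_var h hL1.aemeasurable b hb) _
  -- conclude
  have hfin : ENNReal.ofReal a * (ENNReal.ofReal b * eVariationOn h Set.univ) ≠ ⊤ := by
    refine ENNReal.mul_ne_top ENNReal.ofReal_ne_top (ENNReal.mul_ne_top ENNReal.ofReal_ne_top hBV)
  have hnorm : ‖1 - Complex.exp (-(Complex.I*s*a))‖ * ‖1 - Complex.exp (-(Complex.I*s*b))‖ * ‖G‖
      = ‖∫ t : ℝ, E t * D t‖ := by rw [← hIdent, norm_mul, norm_mul]
  rw [hnorm]
  calc ‖∫ t : ℝ, E t * D t‖ ≤ ∫ t : ℝ, ‖E t * D t‖ := norm_integral_le_integral_norm _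
    _ = ∫ t : ℝ, ‖D t‖ := by
        refine integral_congr_ae (Filter.Eventually.of_forall fun t => ?_)
        show ‖E t * D t‖ = ‖D t‖
        simp only [hE, norm_mul]
        rw [norm_E, one_mul]
    _ = (∫⁻ t : ℝ, (‖D t‖₊ : ENNReal)).toReal := by
        rw [integral_norm_eq_lintegral_enorm hIntD.aestronglyMeasurable]; rfl
    _ ≤ (ENNReal.ofReal a * (ENNReal.ofReal b * eVariationOn h Set.univ)).toReal :=
        ENNReal.toReal_mono hfin main
    _ = a * b * (eVariationOn h Set.univ).toReal := by
        rw [ENNReal.toReal_mul, ENNReal.toReal_mul, ENNReal.toReal_ofReal ha.le,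
          ENNReal.toReal_ofReal hb.le, mul_assoc]

lemma key_bound' (V : ℝ) (G : ℂ) (s : ℝ)
    (key : ∀ a : ℝ, 0 < a → ‖1 - Complex.exp (-(Complex.I*s*a))‖ *
      ‖1 - Complex.exp (-(Complex.I*s*a))‖ * ‖G‖ ≤ a * a * V) :
    ‖G‖ * s^2 ≤ V := by
  set f : ℝ → ℂ := fun a => Complex.exp (-(Complex.I*s*a)) with hf
  have hderiv : HasDerivAt f (-(Complex.I*s)) 0 := by
    have h1 : HasDerivAt (fun a : ℝ => ((a : ℂ))) 1 0 := by
      simpa using (hasDerivAt_id (0:ℝ)).ofReal_comp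
    have h2 : HasDerivAt (fun a : ℝ => -(Complex.I*s*(a:ℂ))) (-(Complex.I*s)) 0 := by
      have := (h1.const_mul (Complex.I*s)).neg; simp only [mul_one] at this; exact this
    simpa using h2.cexp
  have hslope : Tendsto (slope f 0) (nhdsWithin 0 {(0:ℝ)}ᶜ) (nhds (-(Complex.I*s))) :=
    hasDerivAt_iff_tendsto_slope.mp hderiv
  have hslope' : Tendsto (fun a => ‖slope f 0 a‖) (nhdsWithin 0 (Ioi 0)) (nhds ‖-(Complex.I*s)‖) :=
    (continuous_norm.continuousAt.tendsto.comp
      (hslope.mono_left (nhdsWithin_mono 0 (fun x hx => by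
        simp only [mem_compl_iff, mem_singleton_iff]
        exact ne_of_gt hx))))
  have hnorm : ‖-(Complex.I*s)‖ = |s| := by
    simp
  have hq : Tendsto (fun a : ℝ => ‖slope f 0 a‖ * ‖slope f 0 a‖ * ‖G‖)
      (nhdsWithin 0 (Ioi 0)) (nhds (|s| * |s| * ‖G‖)) := by
    rw [← hnorm]
    exact (hslope'.mul hslope').mul_const _
  have habs : |s| * |s| * ‖G‖ = ‖G‖ * s^2 := by
    rw [← abs_mul, abs_mul_self]; ring
  rw [← habs]
  refine le_of_tendsto hq ?_
  refine Filter.eventually_of_mem self_mem_nhdsWithin fun a (ha : a ∈ Ioi 0) => ?_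
  have ha' : (0:ℝ) < a := ha
  have f0 : f 0 = 1 := by simp [hf]
  have hs : ‖slope f 0 a‖ = ‖1 - f a‖ / a := by
    rw [slope_def_module, f0, sub_zero, norm_smul, norm_inv, Real.norm_of_nonneg ha'.le,
      norm_sub_rev, inv_mul_eq_div]
  rw [hs]
  have hpos : (0:ℝ) < a * a := by positivity
  calc ‖1 - f a‖ / a * (‖1 - f a‖ / a) * ‖G‖
      = (‖1 - f a‖ * ‖1 - f a‖ * ‖G‖) / (a * a) := by ring
    _ ≤ (a * a * V) / (a * a) := by apply div_le_div_of_nonneg_right (key a ha') hpos.le |>.trans_eq rfl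
    _ = V := by field_simp

lemma bound_int (Gn : ℝ → ℝ) (hGnm : AEStronglyMeasurable Gn volume) (hGnn : ∀ s, 0 ≤ Gn s)
    (A V : ℝ) (hVnn : 0 ≤ V) (hA : ∀ s, Gn s ≤ A) (hV : ∀ s, Gn s * s^2 ≤ V) :
    Integrable Gn volume ∧ ∫ s, Gn s ≤ 2*(A+V) := by
  set q : ℝ → ℝ := fun s => V / s^2 with hq
  set Q : ℝ → ℝ := (Ici (1:ℝ)).indicator q with hQ
  have hqQ : ∀ s : ℝ, 1 ≤ s → Q s = V / s^2 := fun s hs => indicator_of_mem hs q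
  have hQnn : ∀ s, 0 ≤ Q s := fun s => indicator_nonneg (fun x _ => by positivity) s
  have hQint : Integrable Q volume := by
    refine IntegrableOn.integrable_indicator ?_ measurableSet_Ici
    rw [integrableOn_Ici_iff_integrableOn_Ioi]
    have base : IntegrableOn (fun s : ℝ => s ^ (-2:ℝ)) (Ioi 1) volume :=
      integrableOn_Ioi_rpow_of_lt (by norm_num) one_pos
    refine IntegrableOn.congr_fun (base.const_mul V) (fun x hx => ?_) measurableSet_Ioi
    have hx0 : (0:ℝ) < x := lt_trans one_pos hx
    show V * x ^ (-2:ℝ) = q x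
    rw [hq, Real.rpow_neg hx0.le, show ((2:ℝ)) = ((2:ℕ):ℝ) by norm_num, Real.rpow_natCast]
    simp [div_eq_mul_inv]
  have hQint2 : Integrable (fun s => Q (-s)) volume := hQint.comp_neg
  have hIoc : IntegrableOn (fun _ : ℝ => A) (Ioc (-1:ℝ) 1) volume := by
    apply (integrableOn_const_iff (C := A)).mpr
    right
    rw [Real.volume_Ioc]
    exact ENNReal.ofReal_lt_top
  have hIndInt : Integrable ((Ioc (-1:ℝ) 1).indicator (fun _ => A)) volume :=
    hIoc.integrable_indicator measurableSet_Ioc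
  set B : ℝ → ℝ := fun s => (Ioc (-1:ℝ) 1).indicator (fun _ => A) s + (Q s + Q (-s)) with hB
  have hQsum : Integrable (fun s : ℝ => Q s + Q (-s)) volume := hQint.add hQint2
  have hBint : Integrable B volume := hIndInt.add hQsum
  have hle : ∀ s, Gn s ≤ B s := by
    intro s
    have hIndnn : 0 ≤ (Ioc (-1:ℝ) 1).indicator (fun _ : ℝ => A) s :=
      indicator_nonneg (fun x _ => le_trans (hGnn x) (hA x)) s
    rcases le_or_gt s (-1) with hs | hs
    · have hs2 : (0:ℝ) < s^2 := by nlinarith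
      have h1 : Gn s ≤ V / s^2 := (le_div_iff₀ hs2).mpr (hV s)
      have h2 : Q (-s) = V / s^2 := by
        rw [hqQ (-s) (by linarith), show (-s)^2 = s^2 by ring]
      have := hQnn s
      simp only [hB]
      linarith
    · rcases le_or_gt s 1 with hs' | hs'
      · have h2 : (Ioc (-1:ℝ) 1).indicator (fun _ : ℝ => A) s = A :=
          indicator_of_mem (mem_Ioc.mpr ⟨hs, hs'⟩) _
        have := hQnn s; have := hQnn (-s)
        simp only [hB]
        linarith [hA s]
      · have hs2 : (0:ℝ) < s^2 := by nlinarith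
        have h1 : Gn s ≤ V / s^2 := (le_div_iff₀ hs2).mpr (hV s)
        have h2 : Q s = V / s^2 := hqQ s hs'.le
        have := hQnn (-s)
        simp only [hB]
        linarith
  have hGint : Integrable Gn volume := by
    refine hBint.mono' hGnm (Filter.Eventually.of_forall fun s => ?_)
    rw [Real.norm_of_nonneg (hGnn s)]
    exact hle s
  refine ⟨hGint, ?_⟩
  have hQval : ∫ s, Q s = V := by
    rw [hQ, integral_indicator measurableSet_Ici, integral_Ici_eq_integral_Ioi]
    have : ∀ x ∈ Ioi (1:ℝ), q x = V * x ^ (-2:ℝ) := by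
      intro x hx
      have hx0 : (0:ℝ) < x := lt_trans one_pos hx
      rw [hq, Real.rpow_neg hx0.le, show ((2:ℝ)) = ((2:ℕ):ℝ) by norm_num, Real.rpow_natCast]
      simp [div_eq_mul_inv]
    rw [setIntegral_congr_fun measurableSet_Ioi this, integral_const_mul,
      integral_Ioi_rpow_of_lt (by norm_num) one_pos]
    norm_num
  calc ∫ s, Gn s ≤ ∫ s, B s := integral_mono hGint hBint hle
    _ = (∫ s, (Ioc (-1:ℝ) 1).indicator (fun _ => A) s) + ((∫ s, Q s) + ∫ s, Q (-s)) := by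
        rw [integral_add hIndInt hQsum, integral_add hQint hQint2]
    _ ≤ 2*(A+V) := by
        rw [integral_indicator_const _ measurableSet_Ioc, integral_neg_eq_self, hQval,
          Real.volume_real_Ioc]
        simp only [smul_eq_mul]
        norm_num
        linarith

open MeasureTheory

/-- With `h` of bounded variation, `h ∈ L¹`, `g(x) = ∫_{-∞}^x h`,
`g ∈ L¹`: `∫ |ĝ(s)| ds ≤ 2(‖g‖₁ + var(h))`, and consequently for every
`f ∈ L^∞(ℝ)`, `|∫ f(t) ĝ(t) dt| ≤ 2 ‖f‖_∞ (‖g‖₁ + var(h))`. -/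
theorem fourierTransform_L1_bound_of_bv
    (h : ℝ → ℂ) (hBV : BoundedVariationOn h Set.univ) (hL1 : Integrable h (volume : Measure ℝ))
    (g : ℝ → ℂ) (hg : ∀ x : ℝ, g x = ∫ t in Set.Iic x, h t)
    (hgL1 : Integrable g (volume : Measure ℝ)) :
    (∫ s : ℝ, ‖∫ t : ℝ, Complex.exp (-(Complex.I * s * t)) * g t‖) ≤
      2 * ((∫ t : ℝ, ‖g t‖) + (eVariationOn h Set.univ).toReal) ∧
    ∀ f : ℝ → ℂ, MemLp f ⊤ (volume : Measure ℝ) →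
      ‖∫ t : ℝ, f t * ∫ s : ℝ, Complex.exp (-(Complex.I * t * s)) * g s‖ ≤
        2 * (eLpNorm f ⊤ (volume : Measure ℝ)).toReal
          * ((∫ t : ℝ, ‖g t‖) + (eVariationOn h Set.univ).toReal) := by
  set G : ℝ → ℂ := fun s => ∫ t : ℝ, Complex.exp (-(Complex.I * s * t)) * g t with hGdef
  set A : ℝ := ∫ t : ℝ, ‖g t‖ with hAdef
  set V : ℝ := (eVariationOn h Set.univ).toReal with hVdef
  have hVnn : 0 ≤ V := ENNReal.toReal_nonneg
  have hker : ∀ s : ℝ, Continuous fun t : ℝ => Complex.exp (-(Complex.I * s * t)) := by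
    intro s
    exact Complex.continuous_exp.comp ((continuous_const.mul Complex.continuous_ofReal).neg)
  have hker2 : ∀ t : ℝ, Continuous fun s : ℝ => Complex.exp (-(Complex.I * s * t)) := by
    intro t
    refine Complex.continuous_exp.comp ?_
    exact (((continuous_const.mul Complex.continuous_ofReal)).mul continuous_const).neg
  have hGcont : Continuous G := by
    refine continuous_of_dominated ?_ ?_ hgL1.norm ?_
    · intro s
      exact ((hker s).aestronglyMeasurable).mul hgL1.aestronglyMeasurable
    · intro s
      exact Filter.Eventually.of_forall fun t => by
        simp only [norm_mul, norm_E, one_mul, le_refl]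
    · exact Filter.Eventually.of_forall fun t => (hker2 t).mul continuous_const
  have hGmeas : AEStronglyMeasurable G volume := hGcont.aestronglyMeasurable
  have hA : ∀ s, ‖G s‖ ≤ A := by
    intro s
    calc ‖G s‖ ≤ ∫ t : ℝ, ‖Complex.exp (-(Complex.I * s * t)) * g t‖ :=
          norm_integral_le_integral_norm _
      _ = A := integral_congr_ae (Filter.Eventually.of_forall fun t => by
          simp only [norm_mul, norm_E, one_mul])
  have hVpt : ∀ s, ‖G s‖ * s^2 ≤ V := fun s =>
    key_bound' V (G s) s (fun a ha => key_bound_s14 h hBV hL1 g hg hgL1 s a a ha ha)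
  obtain ⟨hGnormint, hmain⟩ := bound_int (fun s => ‖G s‖) hGcont.norm.aestronglyMeasurable
    (fun s => norm_nonneg _) A V hVnn hA hVpt
  refine ⟨hmain, ?_⟩
  intro f hf
  set C : ℝ := (eLpNorm f ⊤ (volume : Measure ℝ)).toReal with hCdef
  have hCnn : 0 ≤ C := ENNReal.toReal_nonneg
  have hGint : Integrable G volume := by
    rw [← integrable_norm_iff hGmeas]
    exact hGnormint
  have hfin : eLpNormEssSup f volume ≠ ⊤ := by
    rw [← eLpNorm_exponent_top]; exact hf.2.ne
  have hfbd : ∀ᵐ t : ℝ ∂(volume : Measure ℝ), ‖f t‖ ≤ C := by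
    filter_upwards [ae_le_eLpNormEssSup (f := f) (μ := (volume : Measure ℝ))] with t ht
    calc ‖f t‖ = ((‖f t‖₊ : ENNReal)).toReal := by simp
      _ ≤ (eLpNormEssSup f volume).toReal := ENNReal.toReal_mono hfin ht
      _ = C := by rw [hCdef, eLpNorm_exponent_top]
  have hfGint : Integrable (fun t => f t * G t) volume :=
    hGint.bdd_mul hf.aestronglyMeasurable hfbd
  calc ‖∫ t : ℝ, f t * G t‖ ≤ ∫ t : ℝ, ‖f t * G t‖ := norm_integral_le_integral_norm _
    _ ≤ ∫ t : ℝ, C * ‖G t‖ := by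
        refine integral_mono_ae hfGint.norm (hGnormint.const_mul C) ?_
        filter_upwards [hfbd] with t ht
        rw [norm_mul]
        exact mul_le_mul_of_nonneg_right ht (norm_nonneg _)
    _ = C * ∫ t : ℝ, ‖G t‖ := integral_const_mul C _
    _ ≤ C * (2*(A+V)) := mul_le_mul_of_nonneg_left hmain hCnn
    _ = 2 * C * (A + V) := by ring
end
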